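/- arXiv:2408.06096 — 10 statements merged into one kernel-verified Lean document; each statement's English description precedes it below -/
import Mathlib

section
/- Let G be a Hausdorff topological group and 𝔏ₙ, ℌₙ : G → G (n ≥ 1) maps with 𝔏ₙ ∘ ℌₙ = id_G for all n. Suppose μ : G × G → G is a synchronized transported multiplication, i.e. for all a, b ∈ G and all sequences (aₙ), (bₙ) in G with aₙ → a and bₙ → b, the sequence ℌₙ(𝔏ₙ(aₙ) · 𝔏ₙ(bₙ)) converges to μ(a, b). Then μ is associative: μ(μ(a, b), c) = μ(a, μ(b, c)) for all a, b, c ∈ G. -/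
/-! Since `𝔏ₙ ∘ ℌₙ = id`, both nested transports `ℌₙ(𝔏ₙ(ℌₙ(𝔏ₙa · 𝔏ₙb)) · 𝔏ₙc)` and
`ℌₙ(𝔏ₙa · 𝔏ₙ(ℌₙ(𝔏ₙb · 𝔏ₙc)))` equal `ℌₙ(𝔏ₙa · 𝔏ₙb · 𝔏ₙc)` for `n ≥ 1`. Synchronization makes
them converge to `μ(μ(a, b), c)` and `μ(a, μ(b, c))`, so these agree by uniqueness of limits. -/

def transportedMul {M : Type*} [Mul M] (𝔏 ℌ : ℕ → M → M) (n : ℕ) (a b : M) : M :=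
  ℌ n (𝔏 n a * 𝔏 n b)

theorem transportedMul_assoc {M : Type*} [Semigroup M] {𝔏 ℌ : ℕ → M → M} {n : ℕ}
    (h𝔏ℌ : ∀ g, 𝔏 n (ℌ n g) = g) (a b c : M) :
    transportedMul 𝔏 ℌ n (transportedMul 𝔏 ℌ n a b) c =
      transportedMul 𝔏 ℌ n a (transportedMul 𝔏 ℌ n b c) := by
  simp only [transportedMul, h𝔏ℌ, mul_assoc]

theorem transported_mul_assoc_general {G : Type*} [Group G] [TopologicalSpace G]
    [T2Space G]
    (𝔏 ℌ : ℕ → G → G) (h𝔏ℌ : ∀ n, n ≥ 1 → ∀ g : G, 𝔏 n (ℌ n g) = g)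
    (μ : G → G → G)
    (hsync : ∀ (a b : G) (aseq bseq : ℕ → G),
      Filter.Tendsto aseq Filter.atTop (nhds a) →
      Filter.Tendsto bseq Filter.atTop (nhds b) →
      Filter.Tendsto (fun n => ℌ n (𝔏 n (aseq n) * 𝔏 n (bseq n)))
        Filter.atTop (nhds (μ a b))) :
    ∀ a b c : G, μ (μ a b) c = μ a (μ b c) := by
  intro a b c
  have hab := hsync a b _ _ tendsto_const_nhds tendsto_const_nhds
  have hbc := hsync b c _ _ tendsto_const_nhds tendsto_const_nhds
  have hab_c := hsync _ c _ _ hab tendsto_const_nhds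
  have ha_bc := hsync a _ _ _ tendsto_const_nhds hbc
  refine tendsto_nhds_unique_of_eventuallyEq hab_c ha_bc ?_
  filter_upwards [Filter.eventually_ge_atTop 1] with n hn
  exact transportedMul_assoc (h𝔏ℌ n hn) a b c

/-- In a Hausdorff topological group `G` with maps `𝔏ₙ, ℌₙ : G → G`
satisfying `𝔏ₙ ∘ ℌₙ = id`, any synchronized transported multiplication `μ` is
associative. -/
theorem transported_mul_assoc {G : Type*} [Group G] [TopologicalSpace G]
    [IsTopologicalGroup G] [T2Space G]
    (𝔏 ℌ : ℕ → G → G) (h𝔏ℌ : ∀ n, n ≥ 1 → ∀ g : G, 𝔏 n (ℌ n g) = g)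
    (μ : G → G → G)
    (hsync : ∀ (a b : G) (aseq bseq : ℕ → G),
      Filter.Tendsto aseq Filter.atTop (nhds a) →
      Filter.Tendsto bseq Filter.atTop (nhds b) →
      Filter.Tendsto (fun n => ℌ n (𝔏 n (aseq n) * 𝔏 n (bseq n)))
        Filter.atTop (nhds (μ a b))) :
    ∀ a b c : G, μ (μ a b) c = μ a (μ b c) :=
  transported_mul_assoc_general 𝔏 ℌ h𝔏ℌ μ hsync
end

section
/- Let G be a Hausdorff topological group and 𝔏ₙ, ℌₙ : G → G (n ≥ 1) bijective maps with ℌₙ = 𝔏ₙ⁻¹ for all n. Suppose μ : G × G → G is a synchronized transported multiplication, i.e. for all a, b ∈ G and all sequences (aₙ), (bₙ) in G with aₙ → a and bₙ → b, one has ℌₙ(𝔏ₙ(aₙ) · 𝔏ₙ(bₙ)) → μ(a, b). Assume further that the limits e∞ := limₙ ℌₙ(e) and, for each a ∈ G, ι(a) := limₙ ℌₙ(𝔏ₙ(a)⁻¹) exist. Then (G, μ) is a group; more precisely μ is associative, μ(a, e∞) = a for all a ∈ G, and μ(a, ι(a)) = e∞ for all a ∈ G, so e∞ is the identity of (G, μ)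 and ι(a) is the inverse of a in (G, μ). -/
/-! Read a sequence `x` in `G` as the point `limₙ ℌₙ(xₙ)` of `(G, μ)`. Because `𝔏ₙ ∘ ℌₙ = id`,
synchronization says that the pointwise product of two such sequences represents the
`μ`-product of the points they represent. The sequence `𝔏ₙ(a)` represents `a`, `1`
represents `e∞` and `𝔏ₙ(a)⁻¹` represents `ι(a)`, so each group law of `(G, μ)` is inherited
from the corresponding law of `G`, by uniqueness of limits. -/

open Filter Topology

section Transport

variable {G : Type*} [TopologicalSpace G] {𝔏 ℌ : ℕ → G → G}

theorem tendsto_transport_mul [Mul G] {μ : G → G → G}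
    (h𝔏ℌ : ∀ᶠ n in atTop, ∀ g : G, 𝔏 n (ℌ n g) = g)
    (hsync : ∀ (a b : G) (aseq bseq : ℕ → G),
      Tendsto aseq atTop (𝓝 a) → Tendsto bseq atTop (𝓝 b) →
      Tendsto (fun n => ℌ n (𝔏 n (aseq n) * 𝔏 n (bseq n))) atTop (𝓝 (μ a b)))
    ⦃x y : ℕ → G⦄ ⦃a b : G⦄
    (hx : Tendsto (fun n => ℌ n (x n)) atTop (𝓝 a))
    (hy : Tendsto (fun n => ℌ n (y n)) atTop (𝓝 b)) :
    Tendsto (fun n => ℌ n (x n * y n)) atTop (𝓝 (μ a b)) :=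
  (hsync a b _ _ hx hy).congr' <| by
    filter_upwards [h𝔏ℌ] with n hn
    rw [hn, hn]

theorem tendsto_transport_self (hℌ𝔏 : ∀ᶠ n in atTop, ∀ g : G, ℌ n (𝔏 n g) = g) (a : G) :
    Tendsto (fun n => ℌ n (𝔏 n a)) atTop (𝓝 a) :=
  tendsto_const_nhds.congr' <| by
    filter_upwards [hℌ𝔏] with n hn
    rw [hn]

end Transport

theorem transported_group_general {G : Type*} [Group G] [TopologicalSpace G]
    [T2Space G]
    (𝔏 ℌ : ℕ → G → G)
    (h𝔏ℌ : ∀ n, n ≥ 1 → ∀ g : G, 𝔏 n (ℌ n g) = g)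
    (hℌ𝔏 : ∀ n, n ≥ 1 → ∀ g : G, ℌ n (𝔏 n g) = g)
    (μ : G → G → G)
    (hsync : ∀ (a b : G) (aseq bseq : ℕ → G),
      Filter.Tendsto aseq Filter.atTop (nhds a) →
      Filter.Tendsto bseq Filter.atTop (nhds b) →
      Filter.Tendsto (fun n => ℌ n (𝔏 n (aseq n) * 𝔏 n (bseq n)))
        Filter.atTop (nhds (μ a b)))
    (einf : G)
    (heinf : Filter.Tendsto (fun n => ℌ n (1 : G)) Filter.atTop (nhds einf))
    (ι : G → G)
    (hι : ∀ a : G,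
      Filter.Tendsto (fun n => ℌ n ((𝔏 n a)⁻¹)) Filter.atTop (nhds (ι a))) :
    (∀ a b c : G, μ (μ a b) c = μ a (μ b c)) ∧
    (∀ a : G, μ a einf = a) ∧
    (∀ a : G, μ a (ι a) = einf) := by
  have hmul := tendsto_transport_mul (eventually_atTop.2 ⟨1, h𝔏ℌ⟩) hsync
  have hself := tendsto_transport_self (eventually_atTop.2 ⟨1, hℌ𝔏⟩)
  refine ⟨fun a b c => ?_, fun a => ?_, fun a => ?_⟩
  · have hleft := hmul (hmul (hself a) (hself b)) (hself c)
    have hright := hmul (hself a) (hmul (hself b) (hself c))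
    simp only [mul_assoc] at hleft
    exact tendsto_nhds_unique hleft hright
  · have h := hmul (hself a) heinf
    simp only [mul_one] at h
    exact tendsto_nhds_unique h (hself a)
  · have h := hmul (hself a) (hι a)
    simp only [mul_inv_cancel] at h
    exact tendsto_nhds_unique h heinf

/-- With bijective pairs `(𝔏ₙ, ℌₙ)` (`ℌₙ = 𝔏ₙ⁻¹`), a synchronized
transported multiplication `μ` together with the limits `e∞ = limₙ ℌₙ(e)` and
`ι(a) = limₙ ℌₙ(𝔏ₙ(a)⁻¹)` makes `(G, μ)` a group: `μ` is associative, `e∞` is a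
right identity and `ι(a)` is a right inverse of `a`. -/
theorem transported_group {G : Type*} [Group G] [TopologicalSpace G]
    [IsTopologicalGroup G] [T2Space G]
    (𝔏 ℌ : ℕ → G → G)
    (hbij : ∀ n, n ≥ 1 → Function.Bijective (𝔏 n))
    (h𝔏ℌ : ∀ n, n ≥ 1 → ∀ g : G, 𝔏 n (ℌ n g) = g)
    (hℌ𝔏 : ∀ n, n ≥ 1 → ∀ g : G, ℌ n (𝔏 n g) = g)
    (μ : G → G → G)
    (hsync : ∀ (a b : G) (aseq bseq : ℕ → G),
      Filter.Tendsto aseq Filter.atTop (nhds a) →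
      Filter.Tendsto bseq Filter.atTop (nhds b) →
      Filter.Tendsto (fun n => ℌ n (𝔏 n (aseq n) * 𝔏 n (bseq n)))
        Filter.atTop (nhds (μ a b)))
    (einf : G)
    (heinf : Filter.Tendsto (fun n => ℌ n (1 : G)) Filter.atTop (nhds einf))
    (ι : G → G)
    (hι : ∀ a : G,
      Filter.Tendsto (fun n => ℌ n ((𝔏 n a)⁻¹)) Filter.atTop (nhds (ι a))) :
    (∀ a b c : G, μ (μ a b) c = μ a (μ b c)) ∧
    (∀ a : G, μ a einf = a) ∧
    (∀ a : G, μ a (ι a) = einf) :=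
  transported_group_general 𝔏 ℌ h𝔏ℌ hℌ𝔏 μ hsync einf heinf ι hι
end

section
/- Let G be a group, H a Hausdorff topological group, Γ : G → Aut(H) a group homomorphism (an action of G on H by automorphisms, written g ↦ Γ_g), and 𝔏ₙ, ℌₙ : H → H (n ≥ 1) maps with 𝔏ₙ ∘ ℌₙ = id_H for all n. Let 𝔅 : H → G be a map and * : H × H → H an operation such that: (i) (synchronization) for all a, b ∈ H and all sequences aₙ → a, bₙ → b in H, ℌₙ(𝔏ₙ(aₙ) · Γ_{𝔅(a)}(𝔏ₙ(bₙ))) → a * b; (ii) (Rota–Baxter identity with limit-weight) 𝔅(a) · 𝔅(b) = 𝔅(a * b) for all a, b ∈ H. Then the operation * is associative: (a * b) * c = a * (b * c) for all a, b, c ∈ H. -/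
/-!
Both `(a * b) * c` and `a * (b * c)` are limits of the same sequence
`ℌₙ(𝔏ₙ a · Γ_{𝔅 a}(𝔏ₙ b) · Γ_{𝔅(a * b)}(𝔏ₙ c))`: synchronization applied to an approximating
sequence of `a * b` (resp. `b * c`) produces it once `𝔏ₙ ∘ ℌₙ = id` cancels, and for the
right-nested limit one also needs `Γ_{𝔅 a} ∘ Γ_{𝔅 b} = Γ_{𝔅 a · 𝔅 b} = Γ_{𝔅(a * b)}`.
Limits are unique in a Hausdorff space.
-/

open Filter Topology Function

section Synchronization

variable {G H : Type*} [MulOneClass G] [Mul H] [TopologicalSpace H]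

def Synchronizes (Γ : G →* MulAut H) (𝔏 ℌ : ℕ → H → H) (𝔅 : H → G) (star : H → H → H) :
    Prop :=
  ∀ (a b : H) (aseq bseq : ℕ → H), Tendsto aseq atTop (𝓝 a) → Tendsto bseq atTop (𝓝 b) →
    Tendsto (fun n => ℌ n (𝔏 n (aseq n) * Γ (𝔅 a) (𝔏 n (bseq n)))) atTop (𝓝 (star a b))

variable {Γ : G →* MulAut H} {𝔏 ℌ : ℕ → H → H} {𝔅 : H → G} {star : H → H → H}

theorem Synchronizes.tendsto_star_star_left (hsync : Synchronizes Γ 𝔏 ℌ 𝔅 star)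
    (hinv : ∀ᶠ n in atTop, LeftInverse (𝔏 n) (ℌ n)) (a b c : H) :
    Tendsto (fun n => ℌ n (𝔏 n a * Γ (𝔅 a) (𝔏 n b) * Γ (𝔅 (star a b)) (𝔏 n c)))
      atTop (𝓝 (star (star a b) c)) := by
  have hab := hsync a b _ _ tendsto_const_nhds tendsto_const_nhds
  refine (hsync _ c _ _ hab tendsto_const_nhds).congr' ?_
  filter_upwards [hinv] with n hn
  rw [hn]

theorem Synchronizes.tendsto_star_star_right (hsync : Synchronizes Γ 𝔏 ℌ 𝔅 star)
    (hinv : ∀ᶠ n in atTop, LeftInverse (𝔏 n) (ℌ n)) (a b c : H) :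
    Tendsto (fun n => ℌ n (𝔏 n a * Γ (𝔅 a) (𝔏 n b * Γ (𝔅 b) (𝔏 n c))))
      atTop (𝓝 (star a (star b c))) := by
  have hbc := hsync b c _ _ tendsto_const_nhds tendsto_const_nhds
  refine (hsync a _ _ _ tendsto_const_nhds hbc).congr' ?_
  filter_upwards [hinv] with n hn
  rw [hn]

end Synchronization

theorem relRB_descent_assoc_general {G H : Type*} [Group G] [Group H] [TopologicalSpace H]
    [T2Space H]
    (Γ : G →* MulAut H)
    (𝔏 ℌ : ℕ → H → H) (h𝔏ℌ : ∀ n, n ≥ 1 → ∀ h : H, 𝔏 n (ℌ n h) = h)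
    (𝔅 : H → G) (star : H → H → H)
    (hsync : ∀ (a b : H) (aseq bseq : ℕ → H),
      Filter.Tendsto aseq Filter.atTop (nhds a) →
      Filter.Tendsto bseq Filter.atTop (nhds b) →
      Filter.Tendsto (fun n => ℌ n (𝔏 n (aseq n) * Γ (𝔅 a) (𝔏 n (bseq n))))
        Filter.atTop (nhds (star a b)))
    (hRB : ∀ a b : H, 𝔅 a * 𝔅 b = 𝔅 (star a b)) :
    ∀ a b c : H, star (star a b) c = star a (star b c) := by
  intro a b c
  have hsync' : Synchronizes Γ 𝔏 ℌ 𝔅 star := hsync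
  have hinv : ∀ᶠ n in atTop, LeftInverse (𝔏 n) (ℌ n) :=
    eventually_atTop.2 ⟨1, fun n hn => h𝔏ℌ n hn⟩
  have htwist : ∀ x y : H, Γ (𝔅 a) (x * Γ (𝔅 b) y) = Γ (𝔅 a) x * Γ (𝔅 (star a b)) y := by
    intro x y
    rw [map_mul, ← hRB, map_mul, MulAut.mul_apply]
  refine tendsto_nhds_unique (hsync'.tendsto_star_star_left hinv a b c) ?_
  simpa only [htwist, mul_assoc] using hsync'.tendsto_star_star_right hinv a b c

/-- Let `Γ : G → Aut(H)` be an action of a group `G` on a Hausdorff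
topological group `H` by automorphisms, `(𝔏ₙ, ℌₙ)` one-sided-inverse pairs on `H`,
`𝔅 : H → G` and `*` a binary operation on `H` satisfying the synchronization and
the limit-weighted Rota-Baxter identity. Then `*` is associative. -/
theorem relRB_descent_assoc {G H : Type*} [Group G] [Group H] [TopologicalSpace H]
    [IsTopologicalGroup H] [T2Space H]
    (Γ : G →* MulAut H)
    (𝔏 ℌ : ℕ → H → H) (h𝔏ℌ : ∀ n, n ≥ 1 → ∀ h : H, 𝔏 n (ℌ n h) = h)
    (𝔅 : H → G) (star : H → H → H)
    (hsync : ∀ (a b : H) (aseq bseq : ℕ → H),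
      Filter.Tendsto aseq Filter.atTop (nhds a) →
      Filter.Tendsto bseq Filter.atTop (nhds b) →
      Filter.Tendsto (fun n => ℌ n (𝔏 n (aseq n) * Γ (𝔅 a) (𝔏 n (bseq n))))
        Filter.atTop (nhds (star a b)))
    (hRB : ∀ a b : H, 𝔅 a * 𝔅 b = 𝔅 (star a b)) :
    ∀ a b c : H, star (star a b) c = star a (star b c) :=
  relRB_descent_assoc_general Γ 𝔏 ℌ h𝔏ℌ 𝔅 star hsync hRB
end

section
/- Let G be a group, H a Hausdorff topological group, Γ : G → Aut(H) a group homomorphism, and 𝔏ₙ, ℌₙ : H → H (n ≥ 1) bijective maps with ℌₙ = 𝔏ₙ⁻¹ for all n. Let 𝔅 : H → G and * : H × H → H satisfy: (i) for all a, b ∈ H and all sequences aₙ → a, bₙ → b in H, ℌₙ(𝔏ₙ(aₙ) · Γ_{𝔅(a)}(𝔏ₙ(bₙ))) → a * b; (ii) 𝔅(a) · 𝔅(b) = 𝔅(a * b) for all a, b ∈ H. Assume the limits e∞ := limₙ ℌₙ(e_H) and, for each a ∈ H, ι(a) := limₙ ℌₙ(Γ_{𝔅(a)⁻¹}(𝔏ₙ(a)⁻¹))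 exist. Then 𝔅(e∞) = e_G, a * e∞ = a for all a ∈ H, and a * ι(a) = e∞ for all a ∈ H; consequently (H, *) is a group with identity e∞ in which the inverse of a is ι(a). -/
/-!
Each identity `star a b = c` follows by feeding condition (i) sequences for which the
transported product `ℌₙ(𝔏ₙ(aₙ) · Γ_{𝔅(a)}(𝔏ₙ(bₙ)))` is eventually constant: with `bₙ = ℌₙ(e_H)`
it is eventually `a`, and with `bₙ` the sequence defining `ι(a)` it is eventually `ℌₙ(e_H)`.
Uniqueness of limits in the Hausdorff space `H` identifies `star a b` with that value.
Finally `e∞ * e∞ = e∞`, so condition (ii) gives `𝔅(e∞)² = 𝔅(e∞)`, i.e. `𝔅(e∞) = e_G`.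
-/

open Filter Topology

section LimitProduct

variable {G H : Type*} [Group G] [Group H] [TopologicalSpace H]

def IsLimitProduct (Γ : G →* MulAut H) (𝔏 ℌ : ℕ → H → H) (𝔅 : H → G)
    (star : H → H → H) : Prop :=
  ∀ (a b : H) (aseq bseq : ℕ → H), Tendsto aseq atTop (𝓝 a) → Tendsto bseq atTop (𝓝 b) →
    Tendsto (fun n => ℌ n (𝔏 n (aseq n) * Γ (𝔅 a) (𝔏 n (bseq n)))) atTop (𝓝 (star a b))

variable [T2Space H] {Γ : G →* MulAut H} {𝔏 ℌ : ℕ → H → H} {𝔅 : H → G}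
  {star : H → H → H}

namespace IsLimitProduct

theorem eq_of_eventually_eq (hstar : IsLimitProduct Γ 𝔏 ℌ 𝔅 star) {a b : H}
    {bseq cseq : ℕ → H} {c : H} (hb : Tendsto bseq atTop (𝓝 b))
    (hc : Tendsto cseq atTop (𝓝 c))
    (heq : ∀ᶠ n in atTop, ℌ n (𝔏 n a * Γ (𝔅 a) (𝔏 n (bseq n))) = cseq n) :
    star a b = c :=
  tendsto_nhds_unique (hstar a b _ _ tendsto_const_nhds hb)
    (hc.congr' (heq.mono fun _ h => h.symm))

theorem star_lim_one (hstar : IsLimitProduct Γ 𝔏 ℌ 𝔅 star)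
    (h𝔏ℌ : ∀ᶠ n in atTop, ∀ h, 𝔏 n (ℌ n h) = h) (hℌ𝔏 : ∀ᶠ n in atTop, ∀ h, ℌ n (𝔏 n h) = h)
    {e : H} (he : Tendsto (fun n => ℌ n 1) atTop (𝓝 e)) (a : H) :
    star a e = a :=
  hstar.eq_of_eventually_eq he tendsto_const_nhds <| (h𝔏ℌ.and hℌ𝔏).mono fun n ⟨h𝔏ℌ, hℌ𝔏⟩ => by
    rw [h𝔏ℌ, map_one, mul_one, hℌ𝔏]

theorem star_lim_inv (hstar : IsLimitProduct Γ 𝔏 ℌ 𝔅 star)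
    (h𝔏ℌ : ∀ᶠ n in atTop, ∀ h, 𝔏 n (ℌ n h) = h)
    {e : H} (he : Tendsto (fun n => ℌ n 1) atTop (𝓝 e)) {a i : H}
    (hi : Tendsto (fun n => ℌ n (Γ (𝔅 a)⁻¹ ((𝔏 n a)⁻¹))) atTop (𝓝 i)) :
    star a i = e :=
  hstar.eq_of_eventually_eq hi he <| h𝔏ℌ.mono fun n h𝔏ℌ => by
    rw [h𝔏ℌ, map_inv Γ, MulAut.apply_inv_self, mul_inv_cancel]

end IsLimitProduct

end LimitProduct

theorem eq_one_of_map_mul_of_idem {G H : Type*} [Group G] {f : H → G} {star : H → H → H}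
    (hf : ∀ a b, f a * f b = f (star a b)) {e : H} (he : star e e = e) : f e = 1 :=
  mul_eq_right.1 (by rw [hf, he])

theorem relRB_descent_group_general {G H : Type*} [Group G] [Group H] [TopologicalSpace H]
    [T2Space H]
    (Γ : G →* MulAut H)
    (𝔏 ℌ : ℕ → H → H)
    (h𝔏ℌ : ∀ n, n ≥ 1 → ∀ h : H, 𝔏 n (ℌ n h) = h)
    (hℌ𝔏 : ∀ n, n ≥ 1 → ∀ h : H, ℌ n (𝔏 n h) = h)
    (𝔅 : H → G) (star : H → H → H)
    (hsync : ∀ (a b : H) (aseq bseq : ℕ → H),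
      Filter.Tendsto aseq Filter.atTop (nhds a) →
      Filter.Tendsto bseq Filter.atTop (nhds b) →
      Filter.Tendsto (fun n => ℌ n (𝔏 n (aseq n) * Γ (𝔅 a) (𝔏 n (bseq n))))
        Filter.atTop (nhds (star a b)))
    (hRB : ∀ a b : H, 𝔅 a * 𝔅 b = 𝔅 (star a b))
    (einf : H)
    (heinf : Filter.Tendsto (fun n => ℌ n (1 : H)) Filter.atTop (nhds einf))
    (ι : H → H)
    (hι : ∀ a : H,
      Filter.Tendsto (fun n => ℌ n (Γ (𝔅 a)⁻¹ ((𝔏 n a)⁻¹)))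
        Filter.atTop (nhds (ι a))) :
    𝔅 einf = 1 ∧ (∀ a : H, star a einf = a) ∧ (∀ a : H, star a (ι a) = einf) := by
  have hstar : IsLimitProduct Γ 𝔏 ℌ 𝔅 star := hsync
  have h𝔏ℌ' : ∀ᶠ n in atTop, ∀ h, 𝔏 n (ℌ n h) = h := eventually_atTop.2 ⟨1, h𝔏ℌ⟩
  have hℌ𝔏' : ∀ᶠ n in atTop, ∀ h, ℌ n (𝔏 n h) = h := eventually_atTop.2 ⟨1, hℌ𝔏⟩
  have hid : ∀ a, star a einf = a := hstar.star_lim_one h𝔏ℌ' hℌ𝔏' heinf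
  exact ⟨eq_one_of_map_mul_of_idem hRB (hid einf), hid,
    fun a => hstar.star_lim_inv h𝔏ℌ' heinf (hι a)⟩

/-- With bijective pairs `(𝔏ₙ, ℌₙ)` on `H`, a limit-weighted relative
Rota-Baxter operator `𝔅 : H → G` for an action `Γ : G → Aut(H)`, and the limits
`e∞ = limₙ ℌₙ(e_H)` and `ι(a) = limₙ ℌₙ(Γ_{𝔅(a)⁻¹}(𝔏ₙ(a)⁻¹))`, one has
`𝔅(e∞) = e_G`, `a * e∞ = a` and `a * ι(a) = e∞`, so `(H, *)` is a group with
identity `e∞` and inverse `ι`. -/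
theorem relRB_descent_group {G H : Type*} [Group G] [Group H] [TopologicalSpace H]
    [IsTopologicalGroup H] [T2Space H]
    (Γ : G →* MulAut H)
    (𝔏 ℌ : ℕ → H → H)
    (hbij : ∀ n, n ≥ 1 → Function.Bijective (𝔏 n))
    (h𝔏ℌ : ∀ n, n ≥ 1 → ∀ h : H, 𝔏 n (ℌ n h) = h)
    (hℌ𝔏 : ∀ n, n ≥ 1 → ∀ h : H, ℌ n (𝔏 n h) = h)
    (𝔅 : H → G) (star : H → H → H)
    (hsync : ∀ (a b : H) (aseq bseq : ℕ → H),
      Filter.Tendsto aseq Filter.atTop (nhds a) →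
      Filter.Tendsto bseq Filter.atTop (nhds b) →
      Filter.Tendsto (fun n => ℌ n (𝔏 n (aseq n) * Γ (𝔅 a) (𝔏 n (bseq n))))
        Filter.atTop (nhds (star a b)))
    (hRB : ∀ a b : H, 𝔅 a * 𝔅 b = 𝔅 (star a b))
    (einf : H)
    (heinf : Filter.Tendsto (fun n => ℌ n (1 : H)) Filter.atTop (nhds einf))
    (ι : H → H)
    (hι : ∀ a : H,
      Filter.Tendsto (fun n => ℌ n (Γ (𝔅 a)⁻¹ ((𝔏 n a)⁻¹)))
        Filter.atTop (nhds (ι a))) :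
    𝔅 einf = 1 ∧ (∀ a : H, star a einf = a) ∧ (∀ a : H, star a (ι a) = einf) :=
  relRB_descent_group_general Γ 𝔏 ℌ h𝔏ℌ hℌ𝔏 𝔅 star hsync hRB einf heinf ι hι
end

section
/- Let (G, ·) be a Hausdorff topological group and 𝔏ₙ, ℌₙ : G → G (n ≥ 1) bijective maps with ℌₙ = 𝔏ₙ⁻¹ for all n. Suppose μ : G × G → G is a synchronized transported multiplication (for all sequences aₙ → a, bₙ → b one has ℌₙ(𝔏ₙ(aₙ) · 𝔏ₙ(bₙ)) → μ(a, b)), and suppose Ψ : G × G → G, written (a, b) ↦ Ψ_a(b), satisfies: for all a, b ∈ G and every sequence bₙ → b in G, ℌₙ(a · 𝔏ₙ(bₙ) · a⁻¹) → Ψ_a(b). Let 𝔅 : G → G satisfy the Rota–Baxter identity with limit-weight: for all a, b ∈ G the limit limₙ ℌₙ(𝔏ₙ(a) · 𝔅(a) · 𝔏ₙ(b) · 𝔅(a)⁻¹) exists and 𝔅(a) · 𝔅(b) = 𝔅(limₙ ℌₙ(𝔏ₙ(a) · 𝔅(a) · 𝔏ₙ(b) · 𝔅(a)⁻¹)). Then: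 (1) Ψ_a(μ(b, c)) = μ(Ψ_a(b), Ψ_a(c)) for all a, b, c ∈ G; (2) Ψ_a(Ψ_b(c)) = Ψ_{a·b}(c) for all a, b, c ∈ G, and Ψ_e = id_G; (3) 𝔅(a) · 𝔅(b) = 𝔅(μ(a, Ψ_{𝔅(a)}(b))) for all a, b ∈ G. In other words, Ψ is an action of (G, ·) on (G, μ) by endomorphisms and 𝔅 is a relative Rota–Baxter operator on (G, ·) for this action. -/
/-!
Since `𝔏ₙ ∘ ℌₙ = id` for `n ≥ 1`, each identity compares the limits of two sequences `ℌₙ(wₙ)`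
whose arguments `wₙ` eventually agree as words in `G` once every `𝔏ₙ(ℌₙ(x))` is cancelled;
for instance `a · 𝔏ₙ(b) 𝔏ₙ(c) · a⁻¹ = (a 𝔏ₙ(b) a⁻¹)(a 𝔏ₙ(c) a⁻¹)` gives `Ψ_a(μ(b, c)) =
μ(Ψ_a(b), Ψ_a(c))`. Since `G` is Hausdorff, the two limits then coincide.
-/

open Filter Topology Function

section LimitOperations

variable {G : Type*} [Group G] [TopologicalSpace G]

/-- A synchronized transported multiplication, in the paper's terminology. -/
def IsLimitMul (𝔏 ℌ : ℕ → G → G) (μ : G → G → G) : Prop :=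
  ∀ (a b : G) (aseq bseq : ℕ → G), Tendsto aseq atTop (𝓝 a) → Tendsto bseq atTop (𝓝 b) →
    Tendsto (fun n => ℌ n (𝔏 n (aseq n) * 𝔏 n (bseq n))) atTop (𝓝 (μ a b))

def IsLimitConj (𝔏 ℌ : ℕ → G → G) (Ψ : G → G → G) : Prop :=
  ∀ (a b : G) (bseq : ℕ → G), Tendsto bseq atTop (𝓝 b) →
    Tendsto (fun n => ℌ n (a * 𝔏 n (bseq n) * a⁻¹)) atTop (𝓝 (Ψ a b))

variable {𝔏 ℌ : ℕ → G → G} {μ : G → G → G} {Ψ : G → G → G}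

theorem IsLimitMul.tendsto_const (hμ : IsLimitMul 𝔏 ℌ μ) (a b : G) :
    Tendsto (fun n => ℌ n (𝔏 n a * 𝔏 n b)) atTop (𝓝 (μ a b)) :=
  hμ a b _ _ tendsto_const_nhds tendsto_const_nhds

theorem IsLimitConj.tendsto_const (hΨ : IsLimitConj 𝔏 ℌ Ψ) (a b : G) :
    Tendsto (fun n => ℌ n (a * 𝔏 n b * a⁻¹)) atTop (𝓝 (Ψ a b)) :=
  hΨ a b _ tendsto_const_nhds

variable [T2Space G]

theorem IsLimitConj.map_limitMul (hΨ : IsLimitConj 𝔏 ℌ Ψ) (hμ : IsLimitMul 𝔏 ℌ μ)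
    (hinv : ∀ᶠ n in atTop, LeftInverse (𝔏 n) (ℌ n)) (a b c : G) :
    Ψ a (μ b c) = μ (Ψ a b) (Ψ a c) := by
  refine tendsto_nhds_unique_of_eventuallyEq (hΨ a (μ b c) _ (hμ.tendsto_const b c))
    (hμ _ _ _ _ (hΨ.tendsto_const a b) (hΨ.tendsto_const a c)) ?_
  filter_upwards [hinv] with n hn
  simp only [hn _]
  group

theorem IsLimitConj.apply_apply (hΨ : IsLimitConj 𝔏 ℌ Ψ)
    (hinv : ∀ᶠ n in atTop, LeftInverse (𝔏 n) (ℌ n)) (a b c : G) :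
    Ψ a (Ψ b c) = Ψ (a * b) c := by
  refine tendsto_nhds_unique_of_eventuallyEq (hΨ a (Ψ b c) _ (hΨ.tendsto_const b c))
    (hΨ.tendsto_const (a * b) c) ?_
  filter_upwards [hinv] with n hn
  simp only [hn _]
  group

theorem IsLimitConj.one_apply (hΨ : IsLimitConj 𝔏 ℌ Ψ)
    (hinv : ∀ᶠ n in atTop, LeftInverse (ℌ n) (𝔏 n)) (b : G) : Ψ 1 b = b := by
  refine tendsto_nhds_unique_of_eventuallyEq (hΨ.tendsto_const 1 b) tendsto_const_nhds ?_
  filter_upwards [hinv] with n hn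
  simp only [one_mul, inv_one, mul_one, hn _]

theorem IsLimitMul.eq_of_tendsto_mul_conj (hμ : IsLimitMul 𝔏 ℌ μ) (hΨ : IsLimitConj 𝔏 ℌ Ψ)
    (hinv : ∀ᶠ n in atTop, LeftInverse (𝔏 n) (ℌ n)) {a b c : G} (g : G)
    (hc : Tendsto (fun n => ℌ n (𝔏 n a * g * 𝔏 n b * g⁻¹)) atTop (𝓝 c)) :
    c = μ a (Ψ g b) := by
  refine tendsto_nhds_unique_of_eventuallyEq hc
    (hμ _ _ _ _ tendsto_const_nhds (hΨ.tendsto_const g b)) ?_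
  filter_upwards [hinv] with n hn
  simp only [hn _]
  group

end LimitOperations

theorem limitweight_RB_to_relative_general {G : Type*} [Group G] [TopologicalSpace G]
    [T2Space G]
    (𝔏 ℌ : ℕ → G → G)
    (h𝔏ℌ : ∀ n, n ≥ 1 → ∀ g : G, 𝔏 n (ℌ n g) = g)
    (hℌ𝔏 : ∀ n, n ≥ 1 → ∀ g : G, ℌ n (𝔏 n g) = g)
    (μ : G → G → G)
    (hsync : ∀ (a b : G) (aseq bseq : ℕ → G),
      Filter.Tendsto aseq Filter.atTop (nhds a) →
      Filter.Tendsto bseq Filter.atTop (nhds b) →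
      Filter.Tendsto (fun n => ℌ n (𝔏 n (aseq n) * 𝔏 n (bseq n)))
        Filter.atTop (nhds (μ a b)))
    (Ψ : G → G → G)
    (hΨ : ∀ (a b : G) (bseq : ℕ → G),
      Filter.Tendsto bseq Filter.atTop (nhds b) →
      Filter.Tendsto (fun n => ℌ n (a * 𝔏 n (bseq n) * a⁻¹))
        Filter.atTop (nhds (Ψ a b)))
    (𝔅 : G → G)
    (hRB : ∀ a b : G, ∃ c : G,
      Filter.Tendsto (fun n => ℌ n (𝔏 n a * 𝔅 a * 𝔏 n b * (𝔅 a)⁻¹))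
        Filter.atTop (nhds c) ∧ 𝔅 a * 𝔅 b = 𝔅 c) :
    (∀ a b c : G, Ψ a (μ b c) = μ (Ψ a b) (Ψ a c)) ∧
    (∀ a b c : G, Ψ a (Ψ b c) = Ψ (a * b) c) ∧
    (∀ b : G, Ψ 1 b = b) ∧
    (∀ a b : G, 𝔅 a * 𝔅 b = 𝔅 (μ a (Ψ (𝔅 a) b))) := by
  have hμ : IsLimitMul 𝔏 ℌ μ := hsync
  have hΨ : IsLimitConj 𝔏 ℌ Ψ := hΨ
  have h𝔏ℌ : ∀ᶠ n in atTop, LeftInverse (𝔏 n) (ℌ n) := eventually_atTop.2 ⟨1, h𝔏ℌ⟩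
  have hℌ𝔏 : ∀ᶠ n in atTop, LeftInverse (ℌ n) (𝔏 n) := eventually_atTop.2 ⟨1, hℌ𝔏⟩
  refine ⟨hΨ.map_limitMul hμ h𝔏ℌ, hΨ.apply_apply h𝔏ℌ, hΨ.one_apply hℌ𝔏, fun a b => ?_⟩
  obtain ⟨c, hc, hB⟩ := hRB a b
  rw [hB, hμ.eq_of_tendsto_mul_conj hΨ h𝔏ℌ (𝔅 a) hc]

/-- From a limit-weighted Rota-Baxter operator `𝔅` on `(G, ·)` one
obtains an action `Ψ` of `(G, ·)` on the transported group `(G, μ)` by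
endomorphisms, and `𝔅` is a relative Rota-Baxter operator for this action. -/
theorem limitweight_RB_to_relative {G : Type*} [Group G] [TopologicalSpace G]
    [IsTopologicalGroup G] [T2Space G]
    (𝔏 ℌ : ℕ → G → G)
    (hbij : ∀ n, n ≥ 1 → Function.Bijective (𝔏 n))
    (h𝔏ℌ : ∀ n, n ≥ 1 → ∀ g : G, 𝔏 n (ℌ n g) = g)
    (hℌ𝔏 : ∀ n, n ≥ 1 → ∀ g : G, ℌ n (𝔏 n g) = g)
    (μ : G → G → G)
    (hsync : ∀ (a b : G) (aseq bseq : ℕ → G),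
      Filter.Tendsto aseq Filter.atTop (nhds a) →
      Filter.Tendsto bseq Filter.atTop (nhds b) →
      Filter.Tendsto (fun n => ℌ n (𝔏 n (aseq n) * 𝔏 n (bseq n)))
        Filter.atTop (nhds (μ a b)))
    (Ψ : G → G → G)
    (hΨ : ∀ (a b : G) (bseq : ℕ → G),
      Filter.Tendsto bseq Filter.atTop (nhds b) →
      Filter.Tendsto (fun n => ℌ n (a * 𝔏 n (bseq n) * a⁻¹))
        Filter.atTop (nhds (Ψ a b)))
    (𝔅 : G → G)
    (hRB : ∀ a b : G, ∃ c : G,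
      Filter.Tendsto (fun n => ℌ n (𝔏 n a * 𝔅 a * 𝔏 n b * (𝔅 a)⁻¹))
        Filter.atTop (nhds c) ∧ 𝔅 a * 𝔅 b = 𝔅 c) :
    (∀ a b c : G, Ψ a (μ b c) = μ (Ψ a b) (Ψ a c)) ∧
    (∀ a b c : G, Ψ a (Ψ b c) = Ψ (a * b) c) ∧
    (∀ b : G, Ψ 1 b = b) ∧
    (∀ a b : G, 𝔅 a * 𝔅 b = 𝔅 (μ a (Ψ (𝔅 a) b))) :=
  limitweight_RB_to_relative_general 𝔏 ℌ h𝔏ℌ hℌ𝔏 μ hsync Ψ hΨ 𝔅 hRB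
end

section
/- Let 𝔤 be a real Lie algebra carrying a Hausdorff topology for which 𝔤 is a topological additive group. Let 𝔏ₙ, ℌₙ : 𝔤 → 𝔤 (n ≥ 1) be linear maps with 𝔏ₙ ∘ ℌₙ = id, let γ : 𝔤 → End(𝔤) be linear with each γ_u a derivation of the bracket (γ_u[v, w] = [γ_u v, w] + [v, γ_u w]) and γ_{[u,v]} = γ_u ∘ γ_v − γ_v ∘ γ_u, and let B : 𝔤 → 𝔤 be linear. Assume: (a) there is β : 𝔤 × 𝔤 → 𝔤 such that for all sequences uₙ → u, vₙ → v one has ℌₙ([𝔏ₙ uₙ, 𝔏ₙ vₙ]) → β(u, v); (b) there is α : 𝔤 × 𝔤 → 𝔤 such that for all u, v and every sequence vₙ → v one has ℌₙ(γ_u(𝔏ₙ vₙ)) → α(u, v), and for every sequence uₙ → u one has ℌₙ(γ_{B(uₙ)}(𝔏ₙ v)) → α(B(u), v); (c) [B(u), B(v)] = B(α(B(u), v) − α(B(v), u) + β(u, v)) for all u, v. Define u ▷ v := α(B(u), v). Then for all u, v, w ∈ 𝔤: u ▷ β(v, w) = β(u ▷ v, w) + β(v, u ▷ w), and (β(u,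 v) + u ▷ v − v ▷ u) ▷ w = u ▷ (v ▷ w) − v ▷ (u ▷ w); that is, (𝔤, [·,·], ▷) is a post-Lie algebra with limit-weight. -/
/-!
Since `𝔏ₙ ∘ ℌₙ = id`, the conjugated maps `ℌₙ ∘ D ∘ 𝔏ₙ` and brackets `ℌₙ[𝔏ₙ ·, 𝔏ₙ ·]` compose
exactly as `D` and `[·,·]` do. Hence the Leibniz rule of a derivation and the commutator identity
of an action hold for each `n` at the level of these approximants, and pass to the limit, which is
unique because `𝔤` is Hausdorff. With `D = γ_{B u}` this gives the first identity; the Rota-Baxter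
identity rewrites `B (β u v + u ▷ v - v ▷ u)` as `[B u, B v]`, and `γ_{[B u, B v]}` is the
commutator of `γ_{B u}` and `γ_{B v}`, which gives the second.
-/

open Filter Topology

section LimitOfConjugates

variable {ι R L : Type*} [CommRing R] [LieRing L] [LieAlgebra R L]
  [TopologicalSpace L] [IsTopologicalAddGroup L] [T2Space L]
  {l : Filter ι} [l.NeBot] {𝔏 ℌ : ι → L →ₗ[R] L}

theorem limit_of_derivation_leibniz (h𝔏ℌ : ∀ᶠ n in l, ∀ x, 𝔏 n (ℌ n x) = x)
    {β : L → L → L}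
    (hβ : ∀ (u v : L) (useq vseq : ι → L), Tendsto useq l (𝓝 u) → Tendsto vseq l (𝓝 v) →
      Tendsto (fun n => ℌ n ⁅𝔏 n (useq n), 𝔏 n (vseq n)⁆) l (𝓝 (β u v)))
    {D : L →ₗ[R] L} (hD : ∀ v w : L, D ⁅v, w⁆ = ⁅D v, w⁆ + ⁅v, D w⁆) {δ : L → L}
    (hδ : ∀ (v : L) (vseq : ι → L), Tendsto vseq l (𝓝 v) →
      Tendsto (fun n => ℌ n (D (𝔏 n (vseq n)))) l (𝓝 (δ v)))
    (v w : L) :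
    δ (β v w) = β (δ v) w + β v (δ w) := by
  have hlim : Tendsto (fun n => ℌ n (D (𝔏 n (ℌ n ⁅𝔏 n v, 𝔏 n w⁆)))) l (𝓝 (δ (β v w))) :=
    hδ _ _ (hβ v w _ _ tendsto_const_nhds tendsto_const_nhds)
  have hv := hδ v _ tendsto_const_nhds
  have hw := hδ w _ tendsto_const_nhds
  have hsum := (hβ _ w _ _ hv tendsto_const_nhds).add (hβ v _ _ _ tendsto_const_nhds hw)
  refine tendsto_nhds_unique hlim (hsum.congr' ?_)
  filter_upwards [h𝔏ℌ] with n hn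
  simp only [hn, ← map_add, hD]

theorem limit_of_commutator_eq (h𝔏ℌ : ∀ᶠ n in l, ∀ x, 𝔏 n (ℌ n x) = x)
    {D E F : L →ₗ[R] L} (hF : ∀ w, F w = D (E w) - E (D w)) {δ ε : L → L}
    (hδ : ∀ (v : L) (vseq : ι → L), Tendsto vseq l (𝓝 v) →
      Tendsto (fun n => ℌ n (D (𝔏 n (vseq n)))) l (𝓝 (δ v)))
    (hε : ∀ (v : L) (vseq : ι → L), Tendsto vseq l (𝓝 v) →
      Tendsto (fun n => ℌ n (E (𝔏 n (vseq n)))) l (𝓝 (ε v)))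
    {w c : L} (hc : Tendsto (fun n => ℌ n (F (𝔏 n w))) l (𝓝 c)) :
    c = δ (ε w) - ε (δ w) := by
  have hdiff := (hδ _ _ (hε w _ tendsto_const_nhds)).sub (hε _ _ (hδ w _ tendsto_const_nhds))
  refine tendsto_nhds_unique hc (hdiff.congr' ?_)
  filter_upwards [h𝔏ℌ] with n hn
  simp only [hn, ← map_sub, hF]

end LimitOfConjugates

theorem relRB_gives_limit_postLie_general {𝔤 : Type*} [LieRing 𝔤] [LieAlgebra ℝ 𝔤]
    [TopologicalSpace 𝔤] [IsTopologicalAddGroup 𝔤] [T2Space 𝔤]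
    (𝔏 ℌ : ℕ → 𝔤 →ₗ[ℝ] 𝔤)
    (h𝔏ℌ : ∀ n, n ≥ 1 → ∀ x : 𝔤, 𝔏 n (ℌ n x) = x)
    (γ : 𝔤 →ₗ[ℝ] 𝔤 →ₗ[ℝ] 𝔤)
    (hder : ∀ u v w : 𝔤, γ u ⁅v, w⁆ = ⁅γ u v, w⁆ + ⁅v, γ u w⁆)
    (hact : ∀ u v w : 𝔤, γ ⁅u, v⁆ w = γ u (γ v w) - γ v (γ u w))
    (B : 𝔤 →ₗ[ℝ] 𝔤)
    (β : 𝔤 → 𝔤 → 𝔤)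
    (hβ : ∀ (u v : 𝔤) (useq vseq : ℕ → 𝔤),
      Filter.Tendsto useq Filter.atTop (nhds u) →
      Filter.Tendsto vseq Filter.atTop (nhds v) →
      Filter.Tendsto (fun n => ℌ n ⁅𝔏 n (useq n), 𝔏 n (vseq n)⁆)
        Filter.atTop (nhds (β u v)))
    (α : 𝔤 → 𝔤 → 𝔤)
    (hα : ∀ (u v : 𝔤) (vseq : ℕ → 𝔤),
      Filter.Tendsto vseq Filter.atTop (nhds v) →
      Filter.Tendsto (fun n => ℌ n (γ u (𝔏 n (vseq n))))
        Filter.atTop (nhds (α u v)))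
    (hRB : ∀ u v : 𝔤, ⁅B u, B v⁆ = B (α (B u) v - α (B v) u + β u v)) :
    (∀ u v w : 𝔤,
      α (B u) (β v w) = β (α (B u) v) w + β v (α (B u) w)) ∧
    (∀ u v w : 𝔤,
      α (B (β u v + α (B u) v - α (B v) u)) w
        = α (B u) (α (B v) w) - α (B v) (α (B u) w)) := by
  have h𝔏ℌ' : ∀ᶠ n in atTop, ∀ x, 𝔏 n (ℌ n x) = x :=
    (eventually_ge_atTop 1).mono h𝔏ℌ
  refine ⟨fun u v w => limit_of_derivation_leibniz h𝔏ℌ' hβ (hder (B u)) (hα (B u)) v w,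
    fun u v w => ?_⟩
  have hBracket : B (β u v + α (B u) v - α (B v) u) = ⁅B u, B v⁆ := by
    rw [hRB u v]
    abel_nf
  rw [hBracket]
  exact limit_of_commutator_eq h𝔏ℌ' (hact (B u) (B v)) (hα (B u)) (hα (B v))
    (hα _ w _ tendsto_const_nhds)

/-- A relative Rota-Baxter operator `B` with limit-weight
`limₙ (𝔏ₙ, ℌₙ)` on a topological Lie algebra `𝔤` for an action `γ` induces, via
`u ▷ v := α(B u, v)` (where `α` is the synchronized limit of `ℌₙ ∘ γ ∘ 𝔏ₙ` and
`β` that of `ℌₙ[𝔏ₙ·, 𝔏ₙ·]`), a post-Lie algebra with limit-weight. -/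
theorem relRB_gives_limit_postLie {𝔤 : Type*} [LieRing 𝔤] [LieAlgebra ℝ 𝔤]
    [TopologicalSpace 𝔤] [IsTopologicalAddGroup 𝔤] [T2Space 𝔤]
    (𝔏 ℌ : ℕ → 𝔤 →ₗ[ℝ] 𝔤)
    (h𝔏ℌ : ∀ n, n ≥ 1 → ∀ x : 𝔤, 𝔏 n (ℌ n x) = x)
    (γ : 𝔤 →ₗ[ℝ] 𝔤 →ₗ[ℝ] 𝔤)
    (hder : ∀ u v w : 𝔤, γ u ⁅v, w⁆ = ⁅γ u v, w⁆ + ⁅v, γ u w⁆)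
    (hact : ∀ u v w : 𝔤, γ ⁅u, v⁆ w = γ u (γ v w) - γ v (γ u w))
    (B : 𝔤 →ₗ[ℝ] 𝔤)
    (β : 𝔤 → 𝔤 → 𝔤)
    (hβ : ∀ (u v : 𝔤) (useq vseq : ℕ → 𝔤),
      Filter.Tendsto useq Filter.atTop (nhds u) →
      Filter.Tendsto vseq Filter.atTop (nhds v) →
      Filter.Tendsto (fun n => ℌ n ⁅𝔏 n (useq n), 𝔏 n (vseq n)⁆)
        Filter.atTop (nhds (β u v)))
    (α : 𝔤 → 𝔤 → 𝔤)
    (hα : ∀ (u v : 𝔤) (vseq : ℕ → 𝔤),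
      Filter.Tendsto vseq Filter.atTop (nhds v) →
      Filter.Tendsto (fun n => ℌ n (γ u (𝔏 n (vseq n))))
        Filter.atTop (nhds (α u v)))
    (hαB : ∀ (u v : 𝔤) (useq : ℕ → 𝔤),
      Filter.Tendsto useq Filter.atTop (nhds u) →
      Filter.Tendsto (fun n => ℌ n (γ (B (useq n)) (𝔏 n v)))
        Filter.atTop (nhds (α (B u) v)))
    (hRB : ∀ u v : 𝔤, ⁅B u, B v⁆ = B (α (B u) v - α (B v) u + β u v)) :
    (∀ u v w : 𝔤,
      α (B u) (β v w) = β (α (B u) v) w + β v (α (B u) w)) ∧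
    (∀ u v w : 𝔤,
      α (B (β u v + α (B u) v - α (B v) u)) w
        = α (B u) (α (B v) w) - α (B v) (α (B u) w)) :=
  relRB_gives_limit_postLie_general 𝔏 ℌ h𝔏ℌ γ hder hact B β hβ α hα hRB
end

section
/- Let 𝔤 be a real Lie algebra carrying a Hausdorff topology for which 𝔤 is a topological additive group. Let 𝔏ₙ, ℌₙ : 𝔤 → 𝔤 (n ≥ 1) be linear maps with 𝔏ₙ ∘ ℌₙ = id, let γ : 𝔤 → End(𝔤) be linear with each γ_u a derivation of the bracket and γ_{[u,v]} = γ_u ∘ γ_v − γ_v ∘ γ_u, and let B : 𝔤 → 𝔤 be linear. Assume: (a) (limit-abelianness) for all sequences uₙ → u, vₙ → v one has ℌₙ([𝔏ₙ uₙ, 𝔏ₙ vₙ]) → 0; (b) there is α : 𝔤 × 𝔤 → 𝔤 such that for all u, v and every sequence vₙ → v one has ℌₙ(γ_u(𝔏ₙ vₙ)) → α(u, v), and for every sequence uₙ → u one has ℌₙ(γ_{B(uₙ)}(𝔏ₙ v)) → α(B(u), v); (c) [B(u), B(v)] = B(α(B(u), v) − α(B(v), u)) for all u, v. Then the operation u ▷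 v := α(B(u), v) is left pre-Lie: u ▷ (v ▷ w) − (u ▷ v) ▷ w = v ▷ (u ▷ w) − (v ▷ u) ▷ w for all u, v, w ∈ 𝔤. -/
/-!
Since `𝔏ₙ ∘ ℌₙ = id`, the conjugated operators `ℌₙ ∘ γ_x ∘ 𝔏ₙ` satisfy the same commutation
relation as `γ`. Passing to the limit, `x ↦ α(x, ·)` is additive and satisfies
`α([x, y], w) = α(x, α(y, w)) - α(y, α(x, w))`. At `x = B u`, `y = B v` the Rota–Baxter identity
rewrites `[B u, B v]` as `B (u ▷ v - v ▷ u)`, which is exactly the pre-Lie identity.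
-/

open Filter Topology

theorem map_sub_of_tendsto_apply {ι M N F : Type*} [AddCommGroup M] [AddCommGroup N]
    [TopologicalSpace N] [IsTopologicalAddGroup N] [T2Space N] [FunLike F M N]
    [AddMonoidHomClass F M N] {l : Filter ι} [l.NeBot] {f : ι → F} {g : M → N}
    (h : ∀ x, Tendsto (fun i => f i x) l (𝓝 (g x))) (x y : M) :
    g (x - y) = g x - g y :=
  tendsto_nhds_unique (h (x - y)) (by simpa only [map_sub] using (h x).sub (h y))

section ConjAction

variable {R M : Type*} [CommRing R]

section Module

variable [AddCommGroup M] [Module R M]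

def conjAction (L H : M →ₗ[R] M) (γ : M →ₗ[R] M →ₗ[R] M) : M →ₗ[R] M →ₗ[R] M :=
  (γ.compl₂ L).compr₂ H

@[simp]
theorem conjAction_apply (L H : M →ₗ[R] M) (γ : M →ₗ[R] M →ₗ[R] M) (x y : M) :
    conjAction L H γ x y = H (γ x (L y)) :=
  rfl

theorem sub_apply_of_tendsto_conjAction [TopologicalSpace M] [IsTopologicalAddGroup M]
    [T2Space M] {L H : ℕ → M →ₗ[R] M} {γ : M →ₗ[R] M →ₗ[R] M} {α : M → M → M}
    (hα : ∀ u v, Tendsto (fun n => conjAction (L n) (H n) γ u v) atTop (𝓝 (α u v)))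
    (x y w : M) : α (x - y) w = α x w - α y w :=
  map_sub_of_tendsto_apply (f := fun n => (conjAction (L n) (H n) γ).flip w)
    (fun x => hα x w) x y

end Module

variable [LieRing M] [Module R M]

theorem conjAction_lie {L H : M →ₗ[R] M} (hLH : ∀ x, L (H x) = x) {γ : M →ₗ[R] M →ₗ[R] M}
    (hact : ∀ u v w : M, γ ⁅u, v⁆ w = γ u (γ v w) - γ v (γ u w)) (x y w : M) :
    conjAction L H γ ⁅x, y⁆ w
      = conjAction L H γ x (conjAction L H γ y w) - conjAction L H γ y (conjAction L H γ x w) := by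
  simp only [conjAction_apply, hLH, hact, map_sub]

theorem lie_apply_of_tendsto_conjAction [TopologicalSpace M] [IsTopologicalAddGroup M]
    [T2Space M] {L H : ℕ → M →ₗ[R] M} {γ : M →ₗ[R] M →ₗ[R] M} {α : M → M → M}
    (hLH : ∀ᶠ n in atTop, ∀ x, L n (H n x) = x)
    (hact : ∀ u v w : M, γ ⁅u, v⁆ w = γ u (γ v w) - γ v (γ u w))
    (hα : ∀ (u v : M) (vseq : ℕ → M), Tendsto vseq atTop (𝓝 v) →
      Tendsto (fun n => conjAction (L n) (H n) γ u (vseq n)) atTop (𝓝 (α u v)))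
    (x y w : M) : α ⁅x, y⁆ w = α x (α y w) - α y (α x w) := by
  have hconst : ∀ u v, Tendsto (fun n => conjAction (L n) (H n) γ u v) atTop (𝓝 (α u v)) :=
    fun u v => hα u v _ tendsto_const_nhds
  have hcomm : Tendsto (fun n => conjAction (L n) (H n) γ ⁅x, y⁆ w) atTop
      (𝓝 (α x (α y w) - α y (α x w))) := by
    refine ((hα x _ _ (hconst y w)).sub (hα y _ _ (hconst x w))).congr' ?_
    filter_upwards [hLH] with n hn
    exact (conjAction_lie hn hact x y w).symm
  exact tendsto_nhds_unique (hconst _ w) hcomm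

end ConjAction

theorem relRB_limit_abelian_gives_preLie_general {𝔤 : Type*} [LieRing 𝔤] [LieAlgebra ℝ 𝔤]
    [TopologicalSpace 𝔤] [IsTopologicalAddGroup 𝔤] [T2Space 𝔤]
    (𝔏 ℌ : ℕ → 𝔤 →ₗ[ℝ] 𝔤)
    (h𝔏ℌ : ∀ n, n ≥ 1 → ∀ x : 𝔤, 𝔏 n (ℌ n x) = x)
    (γ : 𝔤 →ₗ[ℝ] 𝔤 →ₗ[ℝ] 𝔤)
    (hact : ∀ u v w : 𝔤, γ ⁅u, v⁆ w = γ u (γ v w) - γ v (γ u w))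
    (B : 𝔤 →ₗ[ℝ] 𝔤)
    (α : 𝔤 → 𝔤 → 𝔤)
    (hα : ∀ (u v : 𝔤) (vseq : ℕ → 𝔤),
      Filter.Tendsto vseq Filter.atTop (nhds v) →
      Filter.Tendsto (fun n => ℌ n (γ u (𝔏 n (vseq n))))
        Filter.atTop (nhds (α u v)))
    (hRB : ∀ u v : 𝔤, ⁅B u, B v⁆ = B (α (B u) v - α (B v) u)) :
    ∀ u v w : 𝔤,
      α (B u) (α (B v) w) - α (B (α (B u) v)) w
        = α (B v) (α (B u) w) - α (B (α (B v) u)) w := by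
  intro u v w
  have hlie :=
    lie_apply_of_tendsto_conjAction (eventually_atTop.2 ⟨1, h𝔏ℌ⟩) hact hα (B u) (B v) w
  have hsub := sub_apply_of_tendsto_conjAction (fun x y => hα x y _ tendsto_const_nhds)
    (B (α (B u) v)) (B (α (B v) u)) w
  rw [hRB, map_sub, hsub] at hlie
  exact sub_eq_sub_iff_sub_eq_sub.2 hlie.symm

/-- If in addition the topological Lie algebra `𝔤` is limit-abelian
(`ℌₙ[𝔏ₙ uₙ, 𝔏ₙ vₙ] → 0`), then the operation `u ▷ v := α(B u, v)` induced by a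
limit-weighted relative Rota-Baxter operator `B` is left pre-Lie. -/
theorem relRB_limit_abelian_gives_preLie {𝔤 : Type*} [LieRing 𝔤] [LieAlgebra ℝ 𝔤]
    [TopologicalSpace 𝔤] [IsTopologicalAddGroup 𝔤] [T2Space 𝔤]
    (𝔏 ℌ : ℕ → 𝔤 →ₗ[ℝ] 𝔤)
    (h𝔏ℌ : ∀ n, n ≥ 1 → ∀ x : 𝔤, 𝔏 n (ℌ n x) = x)
    (γ : 𝔤 →ₗ[ℝ] 𝔤 →ₗ[ℝ] 𝔤)
    (hder : ∀ u v w : 𝔤, γ u ⁅v, w⁆ = ⁅γ u v, w⁆ + ⁅v, γ u w⁆)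
    (hact : ∀ u v w : 𝔤, γ ⁅u, v⁆ w = γ u (γ v w) - γ v (γ u w))
    (B : 𝔤 →ₗ[ℝ] 𝔤)
    (habelian : ∀ (u v : 𝔤) (useq vseq : ℕ → 𝔤),
      Filter.Tendsto useq Filter.atTop (nhds u) →
      Filter.Tendsto vseq Filter.atTop (nhds v) →
      Filter.Tendsto (fun n => ℌ n ⁅𝔏 n (useq n), 𝔏 n (vseq n)⁆)
        Filter.atTop (nhds (0 : 𝔤)))
    (α : 𝔤 → 𝔤 → 𝔤)
    (hα : ∀ (u v : 𝔤) (vseq : ℕ → 𝔤),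
      Filter.Tendsto vseq Filter.atTop (nhds v) →
      Filter.Tendsto (fun n => ℌ n (γ u (𝔏 n (vseq n))))
        Filter.atTop (nhds (α u v)))
    (hαB : ∀ (u v : 𝔤) (useq : ℕ → 𝔤),
      Filter.Tendsto useq Filter.atTop (nhds u) →
      Filter.Tendsto (fun n => ℌ n (γ (B (useq n)) (𝔏 n v)))
        Filter.atTop (nhds (α (B u) v)))
    (hRB : ∀ u v : 𝔤, ⁅B u, B v⁆ = B (α (B u) v - α (B v) u)) :
    ∀ u v w : 𝔤,
      α (B u) (α (B v) w) - α (B (α (B u) v)) w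
        = α (B v) (α (B u) w) - α (B (α (B v) u)) w :=
  relRB_limit_abelian_gives_preLie_general 𝔏 ℌ h𝔏ℌ γ hact B α hα hRB
end

section
/- Let G be a Hausdorff topological group and 𝔏ₙ, ℌₙ : G → G (n ≥ 1) bijective maps with ℌₙ = 𝔏ₙ⁻¹ for all n. Assume: (a) μ : G × G → G is a synchronized transported multiplication (for all sequences aₙ → a, bₙ → b one has ℌₙ(𝔏ₙ(aₙ) · 𝔏ₙ(bₙ)) → μ(a, b)); (b) (completeness) the limits e∞ := limₙ ℌₙ(e) and ι(a) := limₙ ℌₙ(𝔏ₙ(a)⁻¹) exist for every a ∈ G; (c) (binary adjoint synchronization) there is δ : G × G → G such that for all sequences aₙ → a, bₙ → b one has ℌₙ(aₙ · 𝔏ₙ(bₙ) · aₙ⁻¹) → δ(a, b); (d) limₙ 𝔏ₙ(a) = e for every a ∈ G. Then μ is commutative: μ(a, b) = μ(b, a) for all a, b ∈ G. -/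
/-!
Moving `𝔏ₙ(a)` past `𝔏ₙ(b)` gives `𝔏ₙ(a) · 𝔏ₙ(b) = 𝔏ₙ(cₙ) · 𝔏ₙ(a)` with
`cₙ = ℌₙ(𝔏ₙ(a) · 𝔏ₙ(b) · 𝔏ₙ(a)⁻¹)`. Since `𝔏ₙ(a) → e`, adjoint synchronization gives
`cₙ → δ(e, b)`, and `δ(e, b) = b` because `ℌₙ(𝔏ₙ(b)) = b`. Synchronization of `μ`, applied to the
two factorizations of the same sequence, then yields `μ(a, b) = μ(b, a)`.
-/

open Filter Topology

section LimitGroup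

variable {G : Type*} [Group G] [TopologicalSpace G]

def TransportedMulSync (𝔏 ℌ : ℕ → G → G) (μ : G → G → G) : Prop :=
  ∀ (a b : G) (aseq bseq : ℕ → G), Tendsto aseq atTop (𝓝 a) → Tendsto bseq atTop (𝓝 b) →
    Tendsto (fun n => ℌ n (𝔏 n (aseq n) * 𝔏 n (bseq n))) atTop (𝓝 (μ a b))

def AdjointSync (𝔏 ℌ : ℕ → G → G) (δ : G → G → G) : Prop :=
  ∀ (a b : G) (aseq bseq : ℕ → G), Tendsto aseq atTop (𝓝 a) → Tendsto bseq atTop (𝓝 b) →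
    Tendsto (fun n => ℌ n (aseq n * 𝔏 n (bseq n) * (aseq n)⁻¹)) atTop (𝓝 (δ a b))

variable [T2Space G] {𝔏 ℌ : ℕ → G → G}

theorem AdjointSync.apply_one_left {δ : G → G → G} (hδ : AdjointSync 𝔏 ℌ δ)
    (hℌ𝔏 : ∀ᶠ n in atTop, ∀ g, ℌ n (𝔏 n g) = g) (b : G) : δ 1 b = b := by
  have hconst : ∀ᶠ n in atTop, b = ℌ n (1 * 𝔏 n b * 1⁻¹) :=
    hℌ𝔏.mono fun n h => by simp [h]
  exact tendsto_nhds_unique (hδ 1 b _ _ tendsto_const_nhds tendsto_const_nhds)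
    (tendsto_const_nhds.congr' hconst)

theorem AdjointSync.tendsto_conj {δ : G → G → G} (hδ : AdjointSync 𝔏 ℌ δ)
    (hℌ𝔏 : ∀ᶠ n in atTop, ∀ g, ℌ n (𝔏 n g) = g) (b : G) {aseq : ℕ → G}
    (ha : Tendsto aseq atTop (𝓝 1)) :
    Tendsto (fun n => ℌ n (aseq n * 𝔏 n b * (aseq n)⁻¹)) atTop (𝓝 b) := by
  simpa only [hδ.apply_one_left hℌ𝔏] using hδ 1 b aseq _ ha tendsto_const_nhds

theorem TransportedMulSync.comm_of_tendsto_conj {μ : G → G → G} (hμ : TransportedMulSync 𝔏 ℌ μ)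
    (h𝔏ℌ : ∀ᶠ n in atTop, ∀ g, 𝔏 n (ℌ n g) = g) {a b : G}
    (hconj : Tendsto (fun n => ℌ n (𝔏 n a * 𝔏 n b * (𝔏 n a)⁻¹)) atTop (𝓝 b)) :
    μ a b = μ b a := by
  have hfactor : ∀ᶠ n in atTop, 𝔏 n a * 𝔏 n b =
      𝔏 n (ℌ n (𝔏 n a * 𝔏 n b * (𝔏 n a)⁻¹)) * 𝔏 n a :=
    h𝔏ℌ.mono fun n h => by rw [h, inv_mul_cancel_right]
  refine tendsto_nhds_unique ?_ (hμ b a _ _ hconj tendsto_const_nhds)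
  exact (hμ a b _ _ tendsto_const_nhds tendsto_const_nhds).congr'
    (hfactor.mono fun n h => congrArg (ℌ n) h)

end LimitGroup

theorem limitweight_zero_is_limit_abelian_general {G : Type*} [Group G] [TopologicalSpace G]
    [T2Space G]
    (𝔏 ℌ : ℕ → G → G)
    (h𝔏ℌ : ∀ n, n ≥ 1 → ∀ g : G, 𝔏 n (ℌ n g) = g)
    (hℌ𝔏 : ∀ n, n ≥ 1 → ∀ g : G, ℌ n (𝔏 n g) = g)
    (μ : G → G → G)
    (hsync : ∀ (a b : G) (aseq bseq : ℕ → G),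
      Filter.Tendsto aseq Filter.atTop (nhds a) →
      Filter.Tendsto bseq Filter.atTop (nhds b) →
      Filter.Tendsto (fun n => ℌ n (𝔏 n (aseq n) * 𝔏 n (bseq n)))
        Filter.atTop (nhds (μ a b)))
    (δ : G → G → G)
    (hδ : ∀ (a b : G) (aseq bseq : ℕ → G),
      Filter.Tendsto aseq Filter.atTop (nhds a) →
      Filter.Tendsto bseq Filter.atTop (nhds b) →
      Filter.Tendsto (fun n => ℌ n (aseq n * 𝔏 n (bseq n) * (aseq n)⁻¹))
        Filter.atTop (nhds (δ a b)))
    (h𝔏lim : ∀ a : G, Filter.Tendsto (fun n => 𝔏 n a) Filter.atTop (nhds (1 : G))) :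
    ∀ a b : G, μ a b = μ b a := by
  intro a b
  exact TransportedMulSync.comm_of_tendsto_conj hsync (eventually_atTop.2 ⟨1, h𝔏ℌ⟩)
    (AdjointSync.tendsto_conj hδ (eventually_atTop.2 ⟨1, hℌ𝔏⟩) b (h𝔏lim a))

/-- A complete binary-adjoint-synchronized
`limₙ (𝔏ₙ, ℌₙ)`-group with `limₙ 𝔏ₙ(a) = e` has a commutative transported
multiplication, i.e. it is limit-abelian. -/
theorem limitweight_zero_is_limit_abelian {G : Type*} [Group G] [TopologicalSpace G]
    [IsTopologicalGroup G] [T2Space G]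
    (𝔏 ℌ : ℕ → G → G)
    (hbij : ∀ n, n ≥ 1 → Function.Bijective (𝔏 n))
    (h𝔏ℌ : ∀ n, n ≥ 1 → ∀ g : G, 𝔏 n (ℌ n g) = g)
    (hℌ𝔏 : ∀ n, n ≥ 1 → ∀ g : G, ℌ n (𝔏 n g) = g)
    (μ : G → G → G)
    (hsync : ∀ (a b : G) (aseq bseq : ℕ → G),
      Filter.Tendsto aseq Filter.atTop (nhds a) →
      Filter.Tendsto bseq Filter.atTop (nhds b) →
      Filter.Tendsto (fun n => ℌ n (𝔏 n (aseq n) * 𝔏 n (bseq n)))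
        Filter.atTop (nhds (μ a b)))
    (einf : G)
    (heinf : Filter.Tendsto (fun n => ℌ n (1 : G)) Filter.atTop (nhds einf))
    (ι : G → G)
    (hι : ∀ a : G,
      Filter.Tendsto (fun n => ℌ n ((𝔏 n a)⁻¹)) Filter.atTop (nhds (ι a)))
    (δ : G → G → G)
    (hδ : ∀ (a b : G) (aseq bseq : ℕ → G),
      Filter.Tendsto aseq Filter.atTop (nhds a) →
      Filter.Tendsto bseq Filter.atTop (nhds b) →
      Filter.Tendsto (fun n => ℌ n (aseq n * 𝔏 n (bseq n) * (aseq n)⁻¹))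
        Filter.atTop (nhds (δ a b)))
    (h𝔏lim : ∀ a : G, Filter.Tendsto (fun n => 𝔏 n a) Filter.atTop (nhds (1 : G))) :
    ∀ a b : G, μ a b = μ b a :=
  limitweight_zero_is_limit_abelian_general 𝔏 ℌ h𝔏ℌ hℌ𝔏 μ hsync δ hδ h𝔏lim
end

section
/- Let (G, ·) be a Hausdorff topological group, Γ : G → Aut(G) a group homomorphism (g ↦ Γ_g), and 𝔏ₙ, ℌₙ : G → G (n ≥ 1) maps with 𝔏ₙ ∘ ℌₙ = id_G. Assume: (a) μ : G × G → G is a synchronized transported multiplication (for all sequences aₙ → a, bₙ → b one has ℌₙ(𝔏ₙ(aₙ) · 𝔏ₙ(bₙ)) → μ(a, b)); (b) there is ν : G × G → G such that for all a, b ∈ G and every sequence bₙ → b one has ℌₙ(Γ_a(𝔏ₙ(bₙ))) → ν(a, b); (c) 𝔇 : G → G is a relative differential operator with limit-weight, i.e. 𝔇(a · b) = μ(𝔇(a), ν(a, 𝔇(b))) for all a, b ∈ G. Define a ∘ b := ν(a, 𝔇(b)). Then for all a, b, c ∈ G: a ∘ (b · c) = μ(a ∘ b, (a · b) ∘ c),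 and ν(a, b ∘ c) = (a · b) ∘ c. -/
/-!
Since `𝔏ₙ ∘ ℌₙ = id`, feeding the convergent sequence `ℌₙ(Γ_b(𝔏ₙ x))` into the limit
defining `ν(a, ·)` yields `ℌₙ(Γ_a(Γ_b(𝔏ₙ x)))`, so uniqueness of limits gives
`ν(a, ν(b, x)) = ν(ab, x)`; in the same way, `Γ_a` being multiplicative makes `ν(a, ·)`
distribute over `μ`. The first identity is then `ν(a, ·)` applied to `𝔇(bc) = μ(𝔇 b, ν(b, 𝔇 c))`.
-/

open Filter Topology Function

/-- Hypothesis (b) says `IsTransportedLimit 𝔏 ℌ Γ_a (ν a)`, and (a) says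
`IsTransportedLimit₂ 𝔏 ℌ (· * ·) μ`. -/
def IsTransportedLimit {X : Type*} [TopologicalSpace X] (L H : ℕ → X → X) (f φ : X → X) :
    Prop :=
  ∀ (b : X) (bseq : ℕ → X), Tendsto bseq atTop (𝓝 b) →
    Tendsto (fun n => H n (f (L n (bseq n)))) atTop (𝓝 (φ b))

def IsTransportedLimit₂ {X : Type*} [TopologicalSpace X] (L H : ℕ → X → X)
    (m μ : X → X → X) : Prop :=
  ∀ (a b : X) (aseq bseq : ℕ → X), Tendsto aseq atTop (𝓝 a) → Tendsto bseq atTop (𝓝 b) →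
    Tendsto (fun n => H n (m (L n (aseq n)) (L n (bseq n)))) atTop (𝓝 (μ a b))

section TransportedLimit

variable {X : Type*} [TopologicalSpace X] {L H : ℕ → X → X}

theorem IsTransportedLimit.tendsto_apply_transport {f φ : X → X}
    (hf : IsTransportedLimit L H f φ) (hLH : ∀ᶠ n in atTop, LeftInverse (L n) (H n))
    {s : ℕ → X} {y : X} (hs : Tendsto (fun n => H n (s n)) atTop (𝓝 y)) :
    Tendsto (fun n => H n (f (s n))) atTop (𝓝 (φ y)) :=
  (hf y _ hs).congr' (hLH.mono fun n hn => by rw [hn])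

theorem IsTransportedLimit₂.tendsto_apply_transport {m μ : X → X → X}
    (hm : IsTransportedLimit₂ L H m μ) (hLH : ∀ᶠ n in atTop, LeftInverse (L n) (H n))
    {s t : ℕ → X} {x y : X} (hs : Tendsto (fun n => H n (s n)) atTop (𝓝 x))
    (ht : Tendsto (fun n => H n (t n)) atTop (𝓝 y)) :
    Tendsto (fun n => H n (m (s n) (t n))) atTop (𝓝 (μ x y)) :=
  (hm x y _ _ hs ht).congr' (hLH.mono fun n hn => by rw [hn, hn])

variable [T2Space X]

theorem IsTransportedLimit.comp_eq {f g φ ψ χ : X → X} (hf : IsTransportedLimit L H f φ)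
    (hLH : ∀ᶠ n in atTop, LeftInverse (L n) (H n)) (hg : IsTransportedLimit L H g ψ)
    (hfg : IsTransportedLimit L H (f ∘ g) χ) : φ ∘ ψ = χ :=
  funext fun x => tendsto_nhds_unique
    (hf.tendsto_apply_transport hLH (hg x _ tendsto_const_nhds)) (hfg x _ tendsto_const_nhds)

theorem IsTransportedLimit.map_limit₂ {f φ : X → X} {m μ : X → X → X}
    (hf : IsTransportedLimit L H f φ) (hLH : ∀ᶠ n in atTop, LeftInverse (L n) (H n))
    (hm : IsTransportedLimit₂ L H m μ) (hfm : ∀ u v, f (m u v) = m (f u) (f v)) (x y : X) :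
    φ (μ x y) = μ (φ x) (φ y) := by
  have hlhs := hf.tendsto_apply_transport hLH (hm x y _ _ tendsto_const_nhds tendsto_const_nhds)
  have hrhs := hm.tendsto_apply_transport hLH (hf x _ tendsto_const_nhds)
    (hf y _ tendsto_const_nhds)
  simp only [← hfm] at hrhs
  exact tendsto_nhds_unique hlhs hrhs

end TransportedLimit

theorem relDiff_gives_Novikov_group_general {G : Type*} [Group G] [TopologicalSpace G]
    [T2Space G]
    (Γ : G →* MulAut G)
    (𝔏 ℌ : ℕ → G → G) (h𝔏ℌ : ∀ n, n ≥ 1 → ∀ g : G, 𝔏 n (ℌ n g) = g)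
    (μ : G → G → G)
    (hsync : ∀ (a b : G) (aseq bseq : ℕ → G),
      Filter.Tendsto aseq Filter.atTop (nhds a) →
      Filter.Tendsto bseq Filter.atTop (nhds b) →
      Filter.Tendsto (fun n => ℌ n (𝔏 n (aseq n) * 𝔏 n (bseq n)))
        Filter.atTop (nhds (μ a b)))
    (ν : G → G → G)
    (hν : ∀ (a b : G) (bseq : ℕ → G),
      Filter.Tendsto bseq Filter.atTop (nhds b) →
      Filter.Tendsto (fun n => ℌ n (Γ a (𝔏 n (bseq n))))
        Filter.atTop (nhds (ν a b)))
    (𝔇 : G → G)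
    (hdiff : ∀ a b : G, 𝔇 (a * b) = μ (𝔇 a) (ν a (𝔇 b))) :
    (∀ a b c : G, ν a (𝔇 (b * c)) = μ (ν a (𝔇 b)) (ν (a * b) (𝔇 c))) ∧
    (∀ a b c : G, ν a (ν b (𝔇 c)) = ν (a * b) (𝔇 c)) := by
  have hLH : ∀ᶠ n in atTop, LeftInverse (𝔏 n) (ℌ n) := eventually_atTop.2 ⟨1, h𝔏ℌ⟩
  have hΓ (a : G) : IsTransportedLimit 𝔏 ℌ (Γ a) (ν a) := hν a
  have hν_mul (a b : G) : ν a ∘ ν b = ν (a * b) :=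
    (hΓ a).comp_eq hLH (hΓ b) (by simpa only [map_mul, MulAut.coe_mul] using hΓ (a * b))
  have hν_μ (a x y : G) : ν a (μ x y) = μ (ν a x) (ν a y) :=
    (hΓ a).map_limit₂ hLH hsync (map_mul (Γ a)) x y
  refine ⟨fun a b c => ?_, fun a b c => congrFun (hν_mul a b) (𝔇 c)⟩
  rw [hdiff, hν_μ, ← hν_mul, comp_apply]

/-- A relative differential operator `𝔇` with limit-weight on
`(G, ·)` for an action `Γ` induces, via `a ∘ b := ν(a, 𝔇(b))`, a Novikov group
structure with limit-weight: `a ∘ (b·c) = μ(a ∘ b, (a·b) ∘ c)` and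
`ν(a, b ∘ c) = (a·b) ∘ c`. -/
theorem relDiff_gives_Novikov_group {G : Type*} [Group G] [TopologicalSpace G]
    [IsTopologicalGroup G] [T2Space G]
    (Γ : G →* MulAut G)
    (𝔏 ℌ : ℕ → G → G) (h𝔏ℌ : ∀ n, n ≥ 1 → ∀ g : G, 𝔏 n (ℌ n g) = g)
    (μ : G → G → G)
    (hsync : ∀ (a b : G) (aseq bseq : ℕ → G),
      Filter.Tendsto aseq Filter.atTop (nhds a) →
      Filter.Tendsto bseq Filter.atTop (nhds b) →
      Filter.Tendsto (fun n => ℌ n (𝔏 n (aseq n) * 𝔏 n (bseq n)))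
        Filter.atTop (nhds (μ a b)))
    (ν : G → G → G)
    (hν : ∀ (a b : G) (bseq : ℕ → G),
      Filter.Tendsto bseq Filter.atTop (nhds b) →
      Filter.Tendsto (fun n => ℌ n (Γ a (𝔏 n (bseq n))))
        Filter.atTop (nhds (ν a b)))
    (𝔇 : G → G)
    (hdiff : ∀ a b : G, 𝔇 (a * b) = μ (𝔇 a) (ν a (𝔇 b))) :
    (∀ a b c : G, ν a (𝔇 (b * c)) = μ (ν a (𝔇 b)) (ν (a * b) (𝔇 c))) ∧
    (∀ a b c : G, ν a (ν b (𝔇 c)) = ν (a * b) (𝔇 c)) :=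
  relDiff_gives_Novikov_group_general Γ 𝔏 ℌ h𝔏ℌ μ hsync ν hν 𝔇 hdiff
end

section
/- Let 𝔤 be a real Lie algebra carrying a Hausdorff topology for which 𝔤 is a topological additive group. Let 𝔏ₙ, ℌₙ : 𝔤 → 𝔤 (n ≥ 1) be linear maps with 𝔏ₙ ∘ ℌₙ = id, let γ : 𝔤 → End(𝔤) be linear with each γ_u a derivation of the bracket and γ_{[u,v]} = γ_u ∘ γ_v − γ_v ∘ γ_u, and let D : 𝔤 → 𝔤 be linear. Assume: (a) (limit-abelianness) for all sequences uₙ → u, vₙ → v one has ℌₙ([𝔏ₙ uₙ, 𝔏ₙ vₙ]) → 0; (b) there is α : 𝔤 × 𝔤 → 𝔤 such that for all u, v and every sequence vₙ → v one has ℌₙ(γ_u(𝔏ₙ vₙ)) → α(u, v); (c) D is a relative differential operator with limit-weight, i.e. D([u, v]) = α(u, D(v)) − α(v, D(u)) for all u, v ∈ 𝔤. Define u ∘ v := α(u, D(v)). Then for all u, v, w ∈ 𝔤: u ∘ [v, w] = α(u, v ∘ w) − α(u, w ∘ v), and [u, v] ∘ w = α(u, v ∘ w) − α(v, u ∘ w);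 that is, (𝔤, ∘) is a Novikov Lie algebra with limit-weight for the action γ. -/
/-!
`α u` is the limit of the conjugates `ℌₙ ∘ γ u ∘ 𝔏ₙ`. These are additive, and since `𝔏ₙ ∘ ℌₙ = id`
they compose as `γ` does, so in the limit `α u` is additive and `u ↦ α u` satisfies the
representation identity `α ⁅u, v⁆ = α u ∘ α v - α v ∘ α u`. The first identity is then the
differential law for `D` followed by additivity of `α u`, the second is the representation
identity evaluated at `D w`.
-/

open Filter Topology

section

variable {R M : Type*} [CommSemiring R] [AddCommGroup M] [Module R M] [TopologicalSpace M]

def IsLimitWeight (𝔏 ℌ : ℕ → M →ₗ[R] M) (γ : M →ₗ[R] M →ₗ[R] M) (α : M → M → M) : Prop :=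
  ∀ (u v : M) (vseq : ℕ → M), Tendsto vseq atTop (𝓝 v) →
    Tendsto (fun n => ℌ n (γ u (𝔏 n (vseq n)))) atTop (𝓝 (α u v))

namespace IsLimitWeight

variable {𝔏 ℌ : ℕ → M →ₗ[R] M} {γ : M →ₗ[R] M →ₗ[R] M} {α : M → M → M}

theorem tendsto_const (hα : IsLimitWeight 𝔏 ℌ γ α) (u x : M) :
    Tendsto (fun n => ℌ n (γ u (𝔏 n x))) atTop (𝓝 (α u x)) :=
  hα u x (fun _ => x) tendsto_const_nhds

theorem map_sub [ContinuousSub M] [T2Space M] (hα : IsLimitWeight 𝔏 ℌ γ α) (u x y : M) :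
    α u (x - y) = α u x - α u y := by
  refine tendsto_nhds_unique (hα.tendsto_const u (x - y)) ?_
  simpa only [_root_.map_sub] using (hα.tendsto_const u x).sub (hα.tendsto_const u y)

theorem tendsto_comp (hα : IsLimitWeight 𝔏 ℌ γ α)
    (h𝔏ℌ : ∀ᶠ n in atTop, ∀ x, 𝔏 n (ℌ n x) = x) (u v x : M) :
    Tendsto (fun n => ℌ n (γ u (γ v (𝔏 n x)))) atTop (𝓝 (α u (α v x))) := by
  refine (hα u (α v x) _ (hα.tendsto_const v x)).congr' ?_
  filter_upwards [h𝔏ℌ] with n hn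
  rw [hn]

end IsLimitWeight

end

theorem IsLimitWeight.map_lie {R L : Type*} [CommRing R] [LieRing L] [LieAlgebra R L]
    [TopologicalSpace L] [ContinuousSub L] [T2Space L]
    {𝔏 ℌ : ℕ → L →ₗ[R] L} {γ : L →ₗ[R] L →ₗ[R] L} {α : L → L → L}
    (hα : IsLimitWeight 𝔏 ℌ γ α) (h𝔏ℌ : ∀ᶠ n in atTop, ∀ x, 𝔏 n (ℌ n x) = x)
    (hact : ∀ u v w : L, γ ⁅u, v⁆ w = γ u (γ v w) - γ v (γ u w)) (u v x : L) :
    α ⁅u, v⁆ x = α u (α v x) - α v (α u x) := by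
  refine tendsto_nhds_unique (hα.tendsto_const ⁅u, v⁆ x) ?_
  refine ((hα.tendsto_comp h𝔏ℌ u v x).sub (hα.tendsto_comp h𝔏ℌ v u x)).congr fun n => ?_
  rw [hact, _root_.map_sub]

theorem relDiff_gives_limit_Novikov_Lie_general {𝔤 : Type*} [LieRing 𝔤] [LieAlgebra ℝ 𝔤]
    [TopologicalSpace 𝔤] [IsTopologicalAddGroup 𝔤] [T2Space 𝔤]
    (𝔏 ℌ : ℕ → 𝔤 →ₗ[ℝ] 𝔤)
    (h𝔏ℌ : ∀ n, n ≥ 1 → ∀ x : 𝔤, 𝔏 n (ℌ n x) = x)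
    (γ : 𝔤 →ₗ[ℝ] 𝔤 →ₗ[ℝ] 𝔤)
    (hact : ∀ u v w : 𝔤, γ ⁅u, v⁆ w = γ u (γ v w) - γ v (γ u w))
    (D : 𝔤 →ₗ[ℝ] 𝔤)
    (α : 𝔤 → 𝔤 → 𝔤)
    (hα : ∀ (u v : 𝔤) (vseq : ℕ → 𝔤),
      Filter.Tendsto vseq Filter.atTop (nhds v) →
      Filter.Tendsto (fun n => ℌ n (γ u (𝔏 n (vseq n))))
        Filter.atTop (nhds (α u v)))
    (hdiff : ∀ u v : 𝔤, D ⁅u, v⁆ = α u (D v) - α v (D u)) :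
    (∀ u v w : 𝔤, α u (D ⁅v, w⁆) = α u (α v (D w)) - α u (α w (D v))) ∧
    (∀ u v w : 𝔤, α ⁅u, v⁆ (D w) = α u (α v (D w)) - α v (α u (D w))) := by
  have hweight : IsLimitWeight 𝔏 ℌ γ α := hα
  have hinv : ∀ᶠ n in atTop, ∀ x, 𝔏 n (ℌ n x) = x := eventually_atTop.2 ⟨1, h𝔏ℌ⟩
  refine ⟨fun u v w => ?_, fun u v w => hweight.map_lie hinv hact u v (D w)⟩
  rw [hdiff, hweight.map_sub]

/-- A relative differential operator `D` with limit-weight on a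
limit-abelian topological Lie algebra `𝔤` for an action `γ` induces, via
`u ∘ v := α(u, D v)`, a Novikov Lie algebra with limit-weight for the action. -/
theorem relDiff_gives_limit_Novikov_Lie {𝔤 : Type*} [LieRing 𝔤] [LieAlgebra ℝ 𝔤]
    [TopologicalSpace 𝔤] [IsTopologicalAddGroup 𝔤] [T2Space 𝔤]
    (𝔏 ℌ : ℕ → 𝔤 →ₗ[ℝ] 𝔤)
    (h𝔏ℌ : ∀ n, n ≥ 1 → ∀ x : 𝔤, 𝔏 n (ℌ n x) = x)
    (γ : 𝔤 →ₗ[ℝ] 𝔤 →ₗ[ℝ] 𝔤)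
    (hder : ∀ u v w : 𝔤, γ u ⁅v, w⁆ = ⁅γ u v, w⁆ + ⁅v, γ u w⁆)
    (hact : ∀ u v w : 𝔤, γ ⁅u, v⁆ w = γ u (γ v w) - γ v (γ u w))
    (D : 𝔤 →ₗ[ℝ] 𝔤)
    (habelian : ∀ (u v : 𝔤) (useq vseq : ℕ → 𝔤),
      Filter.Tendsto useq Filter.atTop (nhds u) →
      Filter.Tendsto vseq Filter.atTop (nhds v) →
      Filter.Tendsto (fun n => ℌ n ⁅𝔏 n (useq n), 𝔏 n (vseq n)⁆)
        Filter.atTop (nhds (0 : 𝔤)))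
    (α : 𝔤 → 𝔤 → 𝔤)
    (hα : ∀ (u v : 𝔤) (vseq : ℕ → 𝔤),
      Filter.Tendsto vseq Filter.atTop (nhds v) →
      Filter.Tendsto (fun n => ℌ n (γ u (𝔏 n (vseq n))))
        Filter.atTop (nhds (α u v)))
    (hdiff : ∀ u v : 𝔤, D ⁅u, v⁆ = α u (D v) - α v (D u)) :
    (∀ u v w : 𝔤, α u (D ⁅v, w⁆) = α u (α v (D w)) - α u (α w (D v))) ∧
    (∀ u v w : 𝔤, α ⁅u, v⁆ (D w) = α u (α v (D w)) - α v (α u (D w))) :=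
  relDiff_gives_limit_Novikov_Lie_general 𝔏 ℌ h𝔏ℌ γ hact D α hα hdiff
end
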